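/- arXiv:2401.15663 — 2 statements merged into one kernel-verified Lean document; each statement's English description precedes it below -/
import Mathlib

section
/- Let A be a real matrix and let L = λ_max(AᵀA), μ = λ_min(AᵀA). Suppose R : ℝ^n → ℝ^n is differentiable and the map u ↦ R(u) - u is ε₁-Lipschitz. Define f(u) = u - η(Aᵀ(Au - b) + R(u)) for a step size η with 0 < η < 1/(L+1). Then f is γ-Lipschitz with γ = 1 - η(1+μ) + ηε₁; in particular, if ε₁ < 1 + μ, then f is a contraction. -/
/-!
Write `w = u - u'`. Then `f u - f u'` is `((1 - η) I - η AᵀA) w` minus `η` times the increment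
of `R - I`. The symmetric operator `(1 - η) I - η AᵀA` has eigenvalues `1 - η - η λᵢ`, which lie
in `[0, 1 - η (1 + μ)]` because `μ ≤ λᵢ ≤ L` and `η (L + 1) < 1`; expanding in an orthonormal
eigenbasis bounds its norm by `1 - η (1 + μ)`, and the increment of `R - I` adds `η ε₁ ‖w‖`.
-/

open Matrix

/-- Matrix–vector multiplication viewed as a map between Euclidean spaces. -/
noncomputable def mvE {m n : ℕ} (A : Matrix (Fin m) (Fin n) ℝ)
    (u : EuclideanSpace ℝ (Fin n)) : EuclideanSpace ℝ (Fin m) :=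
  (WithLp.equiv 2 (Fin m → ℝ)).symm (A.mulVec (WithLp.equiv 2 (Fin n → ℝ) u))

theorem mvE_eq_toEuclideanLin {m n : ℕ} (A : Matrix (Fin m) (Fin n) ℝ) :
    mvE A = toEuclideanLin A :=
  rfl

theorem OrthonormalBasis.repr_apply_eq_mul_of_apply_eq_smul {ι 𝕜 E : Type*} [Fintype ι]
    [DecidableEq ι] [RCLike 𝕜] [NormedAddCommGroup E] [InnerProductSpace 𝕜 E]
    (b : OrthonormalBasis ι 𝕜 E) {T : E →ₗ[𝕜] E} {d : ι → 𝕜}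
    (hT : ∀ i, T (b i) = d i • b i) (x : E) (i : ι) :
    b.repr (T x) i = d i * b.repr x i := by
  conv_lhs => rw [← b.sum_repr x]
  simp [map_sum, hT, b.repr_self, Pi.single_apply, mul_comm]

theorem OrthonormalBasis.norm_apply_le_of_apply_eq_smul {ι 𝕜 E : Type*} [Fintype ι]
    [RCLike 𝕜] [NormedAddCommGroup E] [InnerProductSpace 𝕜 E]
    (b : OrthonormalBasis ι 𝕜 E) {T : E →ₗ[𝕜] E} {d : ι → 𝕜} {c : ℝ}
    (hT : ∀ i, T (b i) = d i • b i) (hd : ∀ i, ‖d i‖ ≤ c) (x : E) :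
    ‖T x‖ ≤ c * ‖x‖ := by
  classical
  have hsq : ‖T x‖ ^ 2 ≤ (c * ‖x‖) ^ 2 := by
    rw [← b.repr.norm_map, ← b.repr.norm_map x, mul_pow, EuclideanSpace.norm_sq_eq,
      EuclideanSpace.norm_sq_eq, Finset.mul_sum]
    gcongr with i
    rw [b.repr_apply_eq_mul_of_apply_eq_smul hT, norm_mul, mul_pow]
    gcongr
    exact hd i
  have hc : 0 ≤ c * ‖x‖ := by
    rcases isEmpty_or_nonempty ι with hι | ⟨⟨i⟩⟩
    · obtain rfl : x = 0 := by simpa using (b.sum_repr x).symm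
      simp
    · exact mul_nonneg ((norm_nonneg _).trans (hd i)) (norm_nonneg x)
  exact (pow_le_pow_iff_left₀ (norm_nonneg _) hc two_ne_zero).1 hsq

theorem Matrix.IsHermitian.norm_smul_add_smul_toEuclideanLin_le {𝕜 n : Type*} [RCLike 𝕜]
    [Fintype n] [DecidableEq n] {M : Matrix n n 𝕜} (hM : M.IsHermitian) {α β c : ℝ}
    (h : ∀ i, |α + β * hM.eigenvalues i| ≤ c) (x : EuclideanSpace 𝕜 n) :
    ‖(α : 𝕜) • x + (β : 𝕜) • toEuclideanLin M x‖ ≤ c * ‖x‖ := by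
  set T : EuclideanSpace 𝕜 n →ₗ[𝕜] EuclideanSpace 𝕜 n :=
    (α : 𝕜) • LinearMap.id + (β : 𝕜) • toEuclideanLin M with hT
  have hTb : ∀ i, T (hM.eigenvectorBasis i) =
      ((α + β * hM.eigenvalues i : ℝ) : 𝕜) • hM.eigenvectorBasis i := by
    intro i
    have hMb : toEuclideanLin M (hM.eigenvectorBasis i) =
        (hM.eigenvalues i : 𝕜) • hM.eigenvectorBasis i := by
      rw [toLpLin_apply, hM.mulVec_eigenvectorBasis, RCLike.real_smul_eq_coe_smul (K := 𝕜)]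
      rfl
    rw [hT, LinearMap.add_apply, LinearMap.smul_apply, LinearMap.smul_apply, hMb,
      LinearMap.id_apply]
    push_cast
    module
  exact hM.eigenvectorBasis.norm_apply_le_of_apply_eq_smul hTb
    (fun i ↦ by rw [RCLike.norm_ofReal]; exact h i) x

theorem abs_one_sub_sub_mul_le {η μ l L : ℝ} (hη : 0 ≤ η) (hηL : η * (L + 1) < 1)
    (hμl : μ ≤ l) (hlL : l ≤ L) : |1 - η - η * l| ≤ 1 - η * (1 + μ) := by
  have hηl : η * l ≤ η * L := mul_le_mul_of_nonneg_left hlL hη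
  have hημ : η * μ ≤ η * l := mul_le_mul_of_nonneg_left hμl hη
  rw [abs_le]
  constructor <;> linarith

theorem lrpe_empirical_fidelity_contraction_general {m n : ℕ}
    (A : Matrix (Fin m) (Fin n) ℝ) (b : EuclideanSpace ℝ (Fin m))
    (hH : (Aᵀ * A).IsHermitian) (L μ ε₁ η : ℝ)
    (hL : L = ⨆ i, hH.eigenvalues i) (hμ : μ = ⨅ i, hH.eigenvalues i)
    (R : EuclideanSpace ℝ (Fin n) → EuclideanSpace ℝ (Fin n))
    (hLip : ∀ u u' : EuclideanSpace ℝ (Fin n),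
      ‖(R u - u) - (R u' - u')‖ ≤ ε₁ * ‖u - u'‖)
    (hη0 : 0 < η) (hη1 : η < 1 / (L + 1))
    (f : EuclideanSpace ℝ (Fin n) → EuclideanSpace ℝ (Fin n))
    (hf : ∀ u, f u = u - η • (mvE Aᵀ (mvE A u - b) + R u)) :
    (∀ u u', ‖f u - f u'‖ ≤ (1 - η * (1 + μ) + η * ε₁) * ‖u - u'‖) ∧
      (ε₁ < 1 + μ → 1 - η * (1 + μ) + η * ε₁ < 1) := by
  have hηL : η * (L + 1) < 1 := (lt_div_iff₀ (one_div_pos.mp (hη0.trans hη1))).mp hη1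
  have hstep : ∀ w, ‖w - η • (w + mvE (Aᵀ * A) w)‖ ≤ (1 - η * (1 + μ)) * ‖w‖ := by
    intro w
    have key := hH.norm_smul_add_smul_toEuclideanLin_le (α := 1 - η) (β := -η)
      (fun i ↦ by
        rw [neg_mul, ← sub_eq_add_neg]
        exact abs_one_sub_sub_mul_le hη0.le hηL
          (hμ ▸ ciInf_le (Set.finite_range _).bddBelow i)
          (hL ▸ le_ciSup (Set.finite_range _).bddAbove i)) w
    convert key using 2
    simp only [mvE_eq_toEuclideanLin, RCLike.ofReal_real_eq_id, id]
    module
  refine ⟨fun u u' ↦ ?_, fun hε ↦ by linarith [mul_lt_mul_of_pos_left hε hη0]⟩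
  have hdiff : f u - f u' = ((u - u') - η • ((u - u') + mvE (Aᵀ * A) (u - u')))
      - η • ((R u - u) - (R u' - u')) := by
    simp only [hf, mvE_eq_toEuclideanLin, toLpLin_mul_same, LinearMap.comp_apply, map_sub]
    module
  calc ‖f u - f u'‖ ≤ (1 - η * (1 + μ)) * ‖u - u'‖ + η * (ε₁ * ‖u - u'‖) := by
        rw [hdiff]
        refine (norm_sub_le _ _).trans (add_le_add (hstep _) ?_)
        rw [norm_smul_of_nonneg hη0.le]
        exact mul_le_mul_of_nonneg_left (hLip u u') hη0.le
    _ = (1 - η * (1 + μ) + η * ε₁) * ‖u - u'‖ := by ring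

/-- Theorem 1 (convergence of LRPE with empirical data fidelity):
with `f(u) = u - η(Aᵀ(Au - b) + R(u))`, `f` is `γ`-Lipschitz with
`γ = 1 - η(1+μ) + ηε₁`, and is a contraction when `ε₁ < 1 + μ`. -/
theorem lrpe_empirical_fidelity_contraction {m n : ℕ}
    (A : Matrix (Fin m) (Fin n) ℝ) (b : EuclideanSpace ℝ (Fin m))
    (hH : (Aᵀ * A).IsHermitian) (L μ ε₁ η : ℝ)
    (hL : L = ⨆ i, hH.eigenvalues i) (hμ : μ = ⨅ i, hH.eigenvalues i)
    (R : EuclideanSpace ℝ (Fin n) → EuclideanSpace ℝ (Fin n))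
    (hR : Differentiable ℝ R)
    (hLip : ∀ u u' : EuclideanSpace ℝ (Fin n),
      ‖(R u - u) - (R u' - u')‖ ≤ ε₁ * ‖u - u'‖)
    (hη0 : 0 < η) (hη1 : η < 1 / (L + 1))
    (f : EuclideanSpace ℝ (Fin n) → EuclideanSpace ℝ (Fin n))
    (hf : ∀ u, f u = u - η • (mvE Aᵀ (mvE A u - b) + R u)) :
    (∀ u u', ‖f u - f u'‖ ≤ (1 - η * (1 + μ) + η * ε₁) * ‖u - u'‖) ∧
      (ε₁ < 1 + μ → 1 - η * (1 + μ) + η * ε₁ < 1) :=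
  lrpe_empirical_fidelity_contraction_general A b hH L μ ε₁ η hL hμ R hLip hη0 hη1 f hf
end

section
/- Let A be a real matrix with L = λ_max(AᵀA), μ = λ_min(AᵀA). Suppose R : ℝ^n → ℝ^n and S : ℝ^m → ℝ^m are differentiable, R - I is ε₁-Lipschitz, and S - I is ε₂-Lipschitz. Define f(u) = u - η(AᵀS(Au) + R(u)) with 0 < η < 1/(L+1). Then ‖f(u) - f(u')‖ ≤ γ‖u - u'‖ for all u, u', where γ = 1 - η(1+μ) + η(Lε₂ + ε₁). In particular, if ε₁ + Lε₂ < 1 + μ, then f is a contraction and its fixed-point iterates converge. -/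
/-! In an orthonormal eigenbasis of `AᵀA` the linear part `u ↦ u - η (AᵀA u + u)` of `f` is
diagonal with entries `1 - η (1 + λᵢ) ∈ [0, 1 - η (1 + μ)]`, since `η (1 + L) < 1`. What remains
of `f` is `η` times `Aᵀ (S - I) (A ·) + (R - I)`, which is `(‖A‖² ε₂ + ε₁)`-Lipschitz, and
`‖A‖² = L`. Banach's fixed point theorem then gives the fixed point and the convergence. -/

open Matrix

open RealInnerProductSpace InnerProduct Filter Topology

theorem OrthonormalBasis.norm_apply_le_of_inner_apply_eq_mul {ι E : Type*} [Fintype ι]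
    [NormedAddCommGroup E] [InnerProductSpace ℝ E] (b : OrthonormalBasis ι ℝ E) {T : E → E}
    {c : ι → ℝ} {C : ℝ} (hT : ∀ i x, ⟪b i, T x⟫ = c i * ⟪b i, x⟫) (hc : ∀ i, |c i| ≤ C)
    (x : E) : ‖T x‖ ≤ C * ‖x‖ := by
  have hCx : 0 ≤ C * ‖x‖ := by
    rcases isEmpty_or_nonempty ι with hι | ⟨⟨i⟩⟩
    · have hx : ‖x‖ = 0 := by simpa using (b.sum_sq_inner_right x).symm
      simp [hx]
    · exact mul_nonneg ((abs_nonneg _).trans (hc i)) (norm_nonneg _)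
  refine le_of_pow_le_pow_left₀ two_ne_zero hCx ?_
  rw [← b.sum_sq_inner_right, mul_pow, ← b.sum_sq_inner_right, Finset.mul_sum]
  gcongr with i
  rw [hT, mul_pow]
  exact mul_le_mul_of_nonneg_right (sq_le_sq' (abs_le.1 (hc i)).1 (abs_le.1 (hc i)).2) (sq_nonneg _)

theorem exists_unique_fixedPoint_tendsto_iterate {E : Type*} [NormedAddCommGroup E]
    [CompleteSpace E] {f : E → E} {γ : ℝ} (hγ : γ < 1)
    (hf : ∀ u u', ‖f u - f u'‖ ≤ γ * ‖u - u'‖) :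
    ∃ ustar, f ustar = ustar ∧ (∀ v, f v = v → v = ustar) ∧
      ∀ u0, Tendsto (fun k => f^[k] u0) atTop (𝓝 ustar) := by
  have hK : ContractingWith γ.toNNReal f := by
    refine ⟨Real.toNNReal_lt_one.2 hγ, LipschitzWith.of_dist_le_mul fun u u' => ?_⟩
    rw [dist_eq_norm, dist_eq_norm]
    exact (hf u u').trans (by gcongr; exact Real.le_coe_toNNReal γ)
  exact ⟨_, hK.fixedPoint_isFixedPt, fun v hv => hK.fixedPoint_unique hv,
    hK.tendsto_iterate_fixedPoint⟩

section LearnedGradients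

variable {E F : Type*} [NormedAddCommGroup E] [InnerProductSpace ℝ E] [CompleteSpace E]
  [NormedAddCommGroup F] [InnerProductSpace ℝ F] [CompleteSpace F]

open ContinuousLinearMap

theorem norm_adjoint_apply_sub_le (T : E →L[ℝ] F) {g : F → F} {ε : ℝ}
    (hg : ∀ v v', ‖g v - g v'‖ ≤ ε * ‖v - v'‖) (u u' : E) :
    ‖(T†) (g (T u)) - (T†) (g (T u'))‖ ≤ ‖T‖ ^ 2 * ε * ‖u - u'‖ := by
  rcases le_or_gt 0 ε with hε | hε
  · calc ‖(T†) (g (T u)) - (T†) (g (T u'))‖ ≤ ‖T‖ * ‖g (T u) - g (T u')‖ := by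
          rw [← map_sub, ← adjoint.norm_map T]; exact (T†).le_opNorm _
      _ ≤ ‖T‖ * (ε * (‖T‖ * ‖u - u'‖)) := by
          gcongr; refine (hg _ _).trans ?_; gcongr; rw [← map_sub]; exact T.le_opNorm _
      _ = ‖T‖ ^ 2 * ε * ‖u - u'‖ := by ring
  · -- a negative `ε` forces `F` to be trivial
    have : Subsingleton F := ⟨fun v v' => by
      have := (norm_nonneg _).trans (hg v v')
      rw [← sub_eq_zero, ← norm_le_zero_iff]; nlinarith [norm_nonneg (v - v')]⟩
    simp [Subsingleton.elim T 0]

theorem norm_learned_gradient_step_sub_le (T : E →L[ℝ] F) {R : E → E} {S : F → F}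
    {ε₁ ε₂ η a : ℝ} (hη : 0 ≤ η) (hstep : ∀ x, ‖x - η • ((T†) (T x) + x)‖ ≤ a * ‖x‖)
    (hR : ∀ u u', ‖(R u - u) - (R u' - u')‖ ≤ ε₁ * ‖u - u'‖)
    (hS : ∀ v v', ‖(S v - v) - (S v' - v')‖ ≤ ε₂ * ‖v - v'‖) (u u' : E) :
    ‖(u - η • ((T†) (S (T u)) + R u)) - (u' - η • ((T†) (S (T u')) + R u'))‖ ≤
      (a + η * (‖T‖ ^ 2 * ε₂ + ε₁)) * ‖u - u'‖ := by
  set g : F → F := fun v => S v - v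
  have hsplit : (u - η • ((T†) (S (T u)) + R u)) - (u' - η • ((T†) (S (T u')) + R u')) =
      ((u - u') - η • ((T†) (T (u - u')) + (u - u'))) -
        η • (((T†) (g (T u)) - (T†) (g (T u'))) + ((R u - u) - (R u' - u'))) := by
    simp only [g, map_sub]; module
  rw [hsplit]
  calc _ ≤ a * ‖u - u'‖ + η * (‖T‖ ^ 2 * ε₂ * ‖u - u'‖ + ε₁ * ‖u - u'‖) := by
        refine (norm_sub_le _ _).trans (add_le_add (hstep _) ?_)
        rw [norm_smul, Real.norm_of_nonneg hη]
        gcongr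
        exact (norm_add_le _ _).trans (add_le_add (norm_adjoint_apply_sub_le T hS u u') (hR u u'))
    _ = _ := by ring

end LearnedGradients

namespace Matrix

variable {m n : ℕ} (A : Matrix (Fin m) (Fin n) ℝ)

noncomputable def mvECLM : EuclideanSpace ℝ (Fin n) →L[ℝ] EuclideanSpace ℝ (Fin m) :=
  LinearMap.toContinuousLinearMap (toEuclideanLin A)

theorem coe_mvECLM : ⇑A.mvECLM = mvE A := rfl

theorem adjoint_mvECLM : A.mvECLM† = Aᵀ.mvECLM := by
  rw [mvECLM, ← LinearMap.adjoint_toContinuousLinearMap, ← toEuclideanLin_conjTranspose_eq_adjoint,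
    conjTranspose_eq_transpose_of_trivial]
  rfl

theorem mvECLM_mul {k : ℕ} (B : Matrix (Fin k) (Fin m) ℝ) :
    (B * A).mvECLM = B.mvECLM ∘L A.mvECLM := by
  ext x : 1
  simp [coe_mvECLM, mvE, mulVec_mulVec]

variable {A} (hH : (Aᵀ * A).IsHermitian)

theorem inner_eigenvectorBasis_adjoint_mvECLM (i : Fin n) (x : EuclideanSpace ℝ (Fin n)) :
    ⟪hH.eigenvectorBasis i, (A.mvECLM†) (A.mvECLM x)⟫ =
      hH.eigenvalues i * ⟪hH.eigenvectorBasis i, x⟫ := by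
  have heig : (A.mvECLM†) (A.mvECLM (hH.eigenvectorBasis i)) =
      hH.eigenvalues i • hH.eigenvectorBasis i := by
    rw [adjoint_mvECLM, ← ContinuousLinearMap.comp_apply, ← mvECLM_mul, coe_mvECLM]
    ext j
    exact congrFun (hH.mulVec_eigenvectorBasis i) j
  rw [ContinuousLinearMap.adjoint_inner_right, ← ContinuousLinearMap.adjoint_inner_left, heig,
    real_inner_smul_left]

theorem eigenvalues_eq_sq_norm_mvECLM (i : Fin n) :
    hH.eigenvalues i = ‖A.mvECLM (hH.eigenvectorBasis i)‖ ^ 2 := by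
  have h := inner_eigenvectorBasis_adjoint_mvECLM hH i (hH.eigenvectorBasis i)
  rw [ContinuousLinearMap.adjoint_inner_right, real_inner_self_eq_norm_sq,
    real_inner_self_eq_norm_sq, hH.eigenvectorBasis.orthonormal.1 i] at h
  simpa using h.symm

theorem sq_norm_mvECLM_eq_iSup_eigenvalues : ‖A.mvECLM‖ ^ 2 = ⨆ i, hH.eigenvalues i := by
  have hnonneg : ∀ i, 0 ≤ hH.eigenvalues i := fun i => by
    rw [eigenvalues_eq_sq_norm_mvECLM hH]; positivity
  refine le_antisymm ?_ (Real.iSup_le (fun i => ?_) (sq_nonneg _))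
  · rw [sq, ← ContinuousLinearMap.norm_adjoint_comp_self]
    refine ContinuousLinearMap.opNorm_le_bound _ (Real.iSup_nonneg hnonneg) fun x => ?_
    refine hH.eigenvectorBasis.norm_apply_le_of_inner_apply_eq_mul
      (inner_eigenvectorBasis_adjoint_mvECLM hH) (fun i => ?_) x
    rw [abs_of_nonneg (hnonneg i)]
    exact le_ciSup (Finite.bddAbove_range _) i
  · rw [eigenvalues_eq_sq_norm_mvECLM hH]
    gcongr
    simpa using A.mvECLM.le_opNorm (hH.eigenvectorBasis i)

theorem norm_gradient_step_le {L μ η : ℝ} (hup : ∀ i, hH.eigenvalues i ≤ L)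
    (hlow : ∀ i, μ ≤ hH.eigenvalues i) (hη : 0 ≤ η) (hηL : η * (L + 1) ≤ 1)
    (x : EuclideanSpace ℝ (Fin n)) :
    ‖x - η • ((A.mvECLM†) (A.mvECLM x) + x)‖ ≤ (1 - η * (1 + μ)) * ‖x‖ := by
  refine hH.eigenvectorBasis.norm_apply_le_of_inner_apply_eq_mul
    (T := fun x => x - η • ((A.mvECLM†) (A.mvECLM x) + x))
    (c := fun i => 1 - η * (1 + hH.eigenvalues i)) (fun i x => ?_) (fun i => ?_) x
  · rw [inner_sub_right, real_inner_smul_right, inner_add_right,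
      inner_eigenvectorBasis_adjoint_mvECLM hH]
    ring
  · have h1 := mul_le_mul_of_nonneg_left (hup i) hη
    have h2 := mul_le_mul_of_nonneg_left (hlow i) hη
    rw [abs_le]
    constructor <;> nlinarith

end Matrix

theorem lrpe_learned_fidelity_contraction_general {m n : ℕ}
    (A : Matrix (Fin m) (Fin n) ℝ)
    (hH : (Aᵀ * A).IsHermitian) (L μ ε₁ ε₂ η : ℝ)
    (hL : L = ⨆ i, hH.eigenvalues i) (hμ : μ = ⨅ i, hH.eigenvalues i)
    (R : EuclideanSpace ℝ (Fin n) → EuclideanSpace ℝ (Fin n))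
    (S : EuclideanSpace ℝ (Fin m) → EuclideanSpace ℝ (Fin m))
    (hRLip : ∀ u u' : EuclideanSpace ℝ (Fin n),
      ‖(R u - u) - (R u' - u')‖ ≤ ε₁ * ‖u - u'‖)
    (hSLip : ∀ v v' : EuclideanSpace ℝ (Fin m),
      ‖(S v - v) - (S v' - v')‖ ≤ ε₂ * ‖v - v'‖)
    (hη0 : 0 < η) (hη1 : η < 1 / (L + 1))
    (f : EuclideanSpace ℝ (Fin n) → EuclideanSpace ℝ (Fin n))
    (hf : ∀ u, f u = u - η • (mvE Aᵀ (S (mvE A u)) + R u)) :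
    (∀ u u', ‖f u - f u'‖ ≤ (1 - η * (1 + μ) + η * (L * ε₂ + ε₁)) * ‖u - u'‖) ∧
      (ε₁ + L * ε₂ < 1 + μ →
        (1 - η * (1 + μ) + η * (L * ε₂ + ε₁) < 1) ∧
        ∃ ustar, f ustar = ustar ∧ (∀ v, f v = v → v = ustar) ∧
          ∀ u0, Filter.Tendsto (fun k => f^[k] u0) Filter.atTop (nhds ustar)) := by
  have hLA : L = ‖A.mvECLM‖ ^ 2 := hL.trans (sq_norm_mvECLM_eq_iSup_eigenvalues hH).symm
  have hup : ∀ i, hH.eigenvalues i ≤ L := fun i => hL ▸ le_ciSup (Finite.bddAbove_range _) i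
  have hlow : ∀ i, μ ≤ hH.eigenvalues i := fun i => hμ ▸ ciInf_le (Finite.bddBelow_range _) i
  have hηL : η * (L + 1) ≤ 1 := by
    have : 0 < L + 1 := by rw [hLA]; positivity
    exact ((lt_div_iff₀ this).1 hη1).le
  have hlip : ∀ u u', ‖f u - f u'‖ ≤ (1 - η * (1 + μ) + η * (L * ε₂ + ε₁)) * ‖u - u'‖ := by
    intro u u'
    rw [hf, hf, ← coe_mvECLM A, ← coe_mvECLM Aᵀ, ← adjoint_mvECLM, hLA]
    exact norm_learned_gradient_step_sub_le _ hη0.le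
      (norm_gradient_step_le hH hup hlow hη0.le hηL) hRLip hSLip u u'
  refine ⟨hlip, fun hε => ?_⟩
  have hγ : 1 - η * (1 + μ) + η * (L * ε₂ + ε₁) < 1 := by nlinarith
  exact ⟨hγ, exists_unique_fixedPoint_tendsto_iterate hγ hlip⟩

/-- Theorem 2 (convergence of LRPE with learned data fidelity):
with `f(u) = u - η(AᵀS(Au) + R(u))`, `f` is `γ`-Lipschitz with
`γ = 1 - η(1+μ) + η(Lε₂ + ε₁)`; if `ε₁ + Lε₂ < 1 + μ` it is a contraction
and its fixed-point iterates converge. -/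
theorem lrpe_learned_fidelity_contraction {m n : ℕ}
    (A : Matrix (Fin m) (Fin n) ℝ)
    (hH : (Aᵀ * A).IsHermitian) (L μ ε₁ ε₂ η : ℝ)
    (hL : L = ⨆ i, hH.eigenvalues i) (hμ : μ = ⨅ i, hH.eigenvalues i)
    (R : EuclideanSpace ℝ (Fin n) → EuclideanSpace ℝ (Fin n))
    (S : EuclideanSpace ℝ (Fin m) → EuclideanSpace ℝ (Fin m))
    (hR : Differentiable ℝ R) (hS : Differentiable ℝ S)
    (hRLip : ∀ u u' : EuclideanSpace ℝ (Fin n),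
      ‖(R u - u) - (R u' - u')‖ ≤ ε₁ * ‖u - u'‖)
    (hSLip : ∀ v v' : EuclideanSpace ℝ (Fin m),
      ‖(S v - v) - (S v' - v')‖ ≤ ε₂ * ‖v - v'‖)
    (hη0 : 0 < η) (hη1 : η < 1 / (L + 1))
    (f : EuclideanSpace ℝ (Fin n) → EuclideanSpace ℝ (Fin n))
    (hf : ∀ u, f u = u - η • (mvE Aᵀ (S (mvE A u)) + R u)) :
    (∀ u u', ‖f u - f u'‖ ≤ (1 - η * (1 + μ) + η * (L * ε₂ + ε₁)) * ‖u - u'‖) ∧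
      (ε₁ + L * ε₂ < 1 + μ →
        (1 - η * (1 + μ) + η * (L * ε₂ + ε₁) < 1) ∧
        ∃ ustar, f ustar = ustar ∧ (∀ v, f v = v → v = ustar) ∧
          ∀ u0, Filter.Tendsto (fun k => f^[k] u0) Filter.atTop (nhds ustar)) :=
  lrpe_learned_fidelity_contraction_general A hH L μ ε₁ ε₂ η hL hμ R S hRLip hSLip hη0 hη1 f hf
end
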